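/- arXiv:1302.0946 — 9 statements merged into one kernel-verified Lean document; each statement's English description precedes it below -/
import Mathlib

section
/- Let Λ be a compact metric space, φ_t : Λ → Λ a continuous flow, f : Λ → ℝ a continuous function, and T > 0. If for every x ∈ Λ there exists a positive integer n_x such that ∑_{i=0}^{n_x−1} f(φ_{iT}(x)) < 0, then there exist constants C ≥ 0 and λ < 0 such that for every x ∈ Λ and every positive integer n, ∑_{i=0}^{n−1} f(φ_{iT}(x)) ≤ C + nλ. -/
open Filter Finset

/-- Let `Λ` be a compact metric space, `φ` a continuous flow on `Λ`,
`f : Λ → ℝ` continuous and `T > 0`. If for every `x ∈ Λ` there is a positive integer `n`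
with `∑_{i<n} f(φ_{iT}(x)) < 0`, then there are `C ≥ 0` and `λ < 0` such that for every
`x` and every `n ≥ 1`, `∑_{i<n} f(φ_{iT}(x)) ≤ C + n·λ`. -/
theorem stmt0 {Λ : Type*} [MetricSpace Λ] [CompactSpace Λ]
    (φ : ℝ → Λ → Λ) (hφ : Continuous fun p : ℝ × Λ => φ p.1 p.2)
    (hφ0 : ∀ x, φ 0 x = x) (hφadd : ∀ s t x, φ (s + t) x = φ s (φ t x))
    (f : Λ → ℝ) (hf : Continuous f) (T : ℝ) (hT : 0 < T)
    (h : ∀ x : Λ, ∃ n : ℕ, 0 < n ∧ ∑ i ∈ range n, f (φ (i * T) x) < 0) :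
    ∃ (C lam : ℝ), 0 ≤ C ∧ lam < 0 ∧
      ∀ x : Λ, ∀ n : ℕ, 1 ≤ n → ∑ i ∈ range n, f (φ (i * T) x) ≤ C + n * lam := by
  rcases isEmpty_or_nonempty Λ with hΛ | hΛ
  · exact ⟨0, -1, le_refl 0, by norm_num, fun x => (hΛ.false x).elim⟩
  set S : ℕ → Λ → ℝ := fun n x => ∑ i ∈ range n, f (φ (i * T) x) with hS
  have hScont : ∀ n, Continuous (S n) := by
    intro n
    apply continuous_finset_sum
    intro i _
    exact hf.comp (hφ.comp (continuous_const.prodMk continuous_id))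
  -- cocycle
  have cocycle : ∀ k m x, S (k + m) x = S k x + S m (φ (k * T) x) := by
    intro k m x
    rw [hS]
    simp only
    rw [Finset.sum_range_add]
    congr 1
    apply Finset.sum_congr rfl
    intro i _
    rw [show ((k + i : ℕ) : ℝ) * T = (i : ℝ) * T + (k : ℝ) * T by push_cast; ring, hφadd]
  -- compactness: uniform N and ε
  set U : ℕ × ℕ → Set Λ := fun p => {x | S p.1 x < -(1 / (p.2 + 1))} with hU
  have hUopen : ∀ p, IsOpen (U p) := fun p =>
    isOpen_lt (hScont p.1) continuous_const
  have hcover : (Set.univ : Set Λ) ⊆ ⋃ p, U p := by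
    intro x _
    obtain ⟨n, hn, hneg⟩ := h x
    obtain ⟨m, hm⟩ := exists_nat_one_div_lt (by linarith : (0:ℝ) < -(S n x))
    refine Set.mem_iUnion.2 ⟨(n, m), ?_⟩
    simp only [hU, Set.mem_setOf_eq]
    linarith
  obtain ⟨t, ht⟩ := isCompact_univ.elim_finite_subcover U hUopen hcover
  set N : ℕ := max (t.sup Prod.fst) 1 with hN
  set M : ℕ := t.sup Prod.snd with hM
  set ε : ℝ := 1 / (M + 1) with hε
  have hεpos : 0 < ε := by positivity
  have hN1 : 1 ≤ N := le_max_right _ _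
  have key : ∀ x : Λ, ∃ n : ℕ, 1 ≤ n ∧ n ≤ N ∧ S n x ≤ -ε := by
    intro x
    have := ht (Set.mem_univ x)
    rw [Set.mem_iUnion₂] at this
    obtain ⟨p, hpt, hxp⟩ := this
    simp only [hU, Set.mem_setOf_eq] at hxp
    have hp1 : 1 ≤ p.1 := by
      rcases Nat.eq_zero_or_pos p.1 with h0 | h0
      · exfalso
        rw [h0] at hxp
        simp only [hS, range_zero, Finset.sum_empty] at hxp
        have : (0:ℝ) < 1 / (p.2 + 1) := by positivity
        linarith
      · exact h0
    refine ⟨p.1, hp1, le_trans (Finset.le_sup hpt) (le_max_left _ _), ?_⟩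
    have hpm : (p.2 : ℝ) ≤ M := by exact_mod_cast Finset.le_sup (f := Prod.snd) hpt
    have : ε ≤ 1 / (p.2 + 1) := by
      apply one_div_le_one_div_of_le (by positivity)
      linarith
    linarith
  -- bound on f
  obtain ⟨y, -, hy⟩ := isCompact_univ.exists_isMaxOn Set.univ_nonempty hf.continuousOn
  set B : ℝ := max (f y) 0 with hB
  have hB0 : 0 ≤ B := le_max_right _ _
  have hfB : ∀ z, f z ≤ B := fun z => le_trans (hy (Set.mem_univ z)) (le_max_left _ _)
  set lam : ℝ := -ε / N with hlam
  set C : ℝ := N * B + ε with hC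
  have hNr : (1:ℝ) ≤ (N:ℝ) := by exact_mod_cast hN1
  have hlamneg : lam < 0 := by
    rw [hlam]
    apply div_neg_of_neg_of_pos (by linarith) (by linarith)
  have hNlam : (N:ℝ) * lam = -ε := by
    rw [hlam]; field_simp
  refine ⟨C, lam, by positivity, hlamneg, ?_⟩
  intro x n hn
  have main : ∀ n : ℕ, ∀ x : Λ, 1 ≤ n → S n x ≤ C + n * lam := by
    intro n
    induction n using Nat.strong_induction_on with
    | _ n ih =>
      intro x hn1
      rcases le_or_gt n N with hnN | hnN
      · have h1 : S n x ≤ (n:ℝ) * B := by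
          rw [hS]
          calc ∑ i ∈ range n, f (φ (i * T) x) ≤ ∑ i ∈ range n, B :=
                Finset.sum_le_sum (fun i _ => hfB _)
            _ = (n:ℝ) * B := by simp [mul_comm]
        have h2 : (n:ℝ) * B ≤ (N:ℝ) * B := by
          apply mul_le_mul_of_nonneg_right _ hB0
          exact_mod_cast hnN
        have h3 : (N:ℝ) * lam ≤ (n:ℝ) * lam := by
          apply mul_le_mul_of_nonpos_right _ (le_of_lt hlamneg)
          exact_mod_cast hnN
        rw [hC]
        linarith [hNlam ▸ h3]
      · obtain ⟨k, hk1, hkN, hSk⟩ := key x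
        have hkn : k ≤ n := le_trans hkN (le_of_lt hnN)
        have hrec : n = k + (n - k) := by omega
        have hnk1 : 1 ≤ n - k := by omega
        have hnklt : n - k < n := by omega
        have := ih (n - k) hnklt (φ (k * T) x) hnk1
        have hco := cocycle k (n - k) x
        rw [← hrec] at hco
        have hcast : ((n - k : ℕ) : ℝ) = (n : ℝ) - (k : ℝ) := by
          push_cast [Nat.cast_sub hkn]; ring
        have hklam : -ε ≤ (k:ℝ) * lam := by
          have : (k:ℝ) ≤ N := by exact_mod_cast hkN
          have := mul_le_mul_of_nonpos_right this (le_of_lt hlamneg)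
          linarith [hNlam ▸ this]
        rw [hco]
        rw [hcast] at this
        nlinarith
  exact main n x hn
end

section
/- Let Λ be a compact metric space, φ_t : Λ → Λ a continuous flow, f : Λ → ℝ continuous, and T > 0. Suppose that for every x ∈ Λ, the liminf as n → ∞ of (1/n) ∑_{i=0}^{n−1} f(φ_{iT}(x)) is negative. Then there exist C ≥ 0 and λ < 0 such that ∑_{i=0}^{n−1} f(φ_{iT}(x)) ≤ C + nλ for all x ∈ Λ and all n ≥ 1. In particular the Birkhoff averages are uniformly exponentially negative. -/
open Filter Finset

/-- If for every `x` the liminf of the Birkhoff averages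
`(1/n) ∑_{i<n} f(φ_{iT}(x))` is negative, then the Birkhoff sums are uniformly
exponentially negative: there are `C ≥ 0` and `λ < 0` with
`∑_{i<n} f(φ_{iT}(x)) ≤ C + n·λ` for all `x` and all `n ≥ 1`. -/
theorem stmt1 {Λ : Type*} [MetricSpace Λ] [CompactSpace Λ]
    (φ : ℝ → Λ → Λ) (hφ : Continuous fun p : ℝ × Λ => φ p.1 p.2)
    (hφ0 : ∀ x, φ 0 x = x) (hφadd : ∀ s t x, φ (s + t) x = φ s (φ t x))
    (f : Λ → ℝ) (hf : Continuous f) (T : ℝ) (hT : 0 < T)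
    (h : ∀ x : Λ,
      Filter.liminf (fun n : ℕ => (∑ i ∈ range n, f (φ (i * T) x)) / n) atTop < 0) :
    ∃ (C lam : ℝ), 0 ≤ C ∧ lam < 0 ∧
      ∀ x : Λ, ∀ n : ℕ, 1 ≤ n → ∑ i ∈ range n, f (φ (i * T) x) ≤ C + n * lam := by
  classical
  rcases isEmpty_or_nonempty Λ with hE | hNe
  · exact ⟨0, -1, le_refl 0, by norm_num, fun x => (IsEmpty.false x).elim⟩
  set S : ℕ → Λ → ℝ := fun n x => ∑ i ∈ range n, f (φ (i * T) x) with hSdef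
  have hScont : ∀ n, Continuous (S n) := by
    intro n
    apply continuous_finset_sum
    intro i _
    exact hf.comp (hφ.comp (continuous_const.prodMk continuous_id))
  have hcoc : ∀ (m k : ℕ) (x : Λ), S (m + k) x = S m x + S k (φ (m * T) x) := by
    intro m k x
    simp only [hSdef]
    rw [Finset.sum_range_add]
    congr 1
    apply Finset.sum_congr rfl
    intro i _
    congr 1
    have h1 : ((m + i : ℕ) : ℝ) * T = (i : ℝ) * T + (m : ℝ) * T := by push_cast; ring
    rw [h1, hφadd]
  -- bound on f
  obtain ⟨M, hM⟩ : ∃ M, ∀ x, |f x| ≤ M := by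
    obtain ⟨M, hM⟩ := isCompact_univ.exists_bound_of_continuousOn hf.continuousOn
    exact ⟨M, fun x => hM x (Set.mem_univ x)⟩
  obtain ⟨x₀⟩ := hNe
  have hM0 : 0 ≤ M := le_trans (abs_nonneg _) (hM x₀)
  -- for every x there is n ≥ 1 with S n x < 0
  have hex : ∀ x, ∃ n, 1 ≤ n ∧ S n x < 0 := by
    intro x
    by_contra hcon
    push_neg at hcon
    have hge : ∀ n : ℕ, 0 ≤ S n x / n := by
      intro n
      rcases Nat.eq_zero_or_pos n with rfl | hn
      · simp [hSdef]
      · exact div_nonneg (hcon n hn) (Nat.cast_nonneg n)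
    have hbd : Filter.IsBoundedUnder (· ≤ ·) atTop (fun n : ℕ => S n x / n) := by
      apply Filter.isBoundedUnder_of
      refine ⟨max M 0, fun n => ?_⟩
      rcases Nat.eq_zero_or_pos n with rfl | hn
      · simp [hSdef]
      · have hnpos : (0 : ℝ) < n := by exact_mod_cast hn
        have hsum : S n x ≤ n * M := by
          calc S n x ≤ ∑ _i ∈ range n, M :=
                Finset.sum_le_sum fun i _ => (abs_le.mp (hM _)).2
            _ = n * M := by simp [mul_comm]
        have : S n x / n ≤ M := by rw [div_le_iff₀ hnpos]; linarith [hsum]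
        exact le_trans this (le_max_left _ _)
    have hlim : (0 : ℝ) ≤ liminf (fun n : ℕ => S n x / n) atTop := by
      apply Filter.le_liminf_of_le hbd.isCoboundedUnder_ge
      exact Filter.Eventually.of_forall hge
    exact absurd (h x) (not_lt.mpr hlim)
  choose nn hnn1 hnnS using hex
  -- open cover
  have hopen : ∀ x : Λ, IsOpen {y | S (nn x) y < S (nn x) x / 2} :=
    fun x => isOpen_lt (hScont (nn x)) continuous_const
  have hcover : Set.univ ⊆ ⋃ x : Λ, {y | S (nn x) y < S (nn x) x / 2} := by
    intro y _
    exact Set.mem_iUnion.mpr ⟨y, by simp only [Set.mem_setOf_eq]; linarith [hnnS y]⟩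
  obtain ⟨t, ht⟩ := isCompact_univ.elim_finite_subcover _ hopen hcover
  have hx₀ := ht (Set.mem_univ x₀)
  simp only [Set.mem_iUnion] at hx₀
  obtain ⟨z, hz, _⟩ := hx₀
  have htne : t.Nonempty := ⟨z, hz⟩
  set N := t.sup nn with hNdef
  set ε := t.inf' htne (fun x => -(S (nn x) x) / 2) with hεdef
  have hεpos : 0 < ε := by
    rw [hεdef]
    rw [Finset.lt_inf'_iff]
    intro b hb
    linarith [hnnS b]
  have hN1 : 1 ≤ N := le_trans (hnn1 z) (Finset.le_sup hz)
  have hN0 : (0 : ℝ) < N := by exact_mod_cast Nat.lt_of_lt_of_le Nat.zero_lt_one hN1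
  have hkey : ∀ y, ∃ m, 1 ≤ m ∧ m ≤ N ∧ S m y ≤ -ε := by
    intro y
    have hy := ht (Set.mem_univ y)
    simp only [Set.mem_iUnion] at hy
    obtain ⟨w, hw, hwy⟩ := hy
    refine ⟨nn w, hnn1 w, Finset.le_sup hw, ?_⟩
    have h1 : ε ≤ -(S (nn w) w) / 2 := Finset.inf'_le _ hw
    simp only [Set.mem_setOf_eq] at hwy
    linarith
  refine ⟨N * M + ε, -ε / N, ?_, ?_, ?_⟩
  · positivity
  · exact div_neg_of_neg_of_pos (neg_neg_of_pos hεpos) hN0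
  · intro x n hn1
    show S n x ≤ N * M + ε + n * (-ε / N)
    induction n using Nat.strong_induction_on generalizing x with
    | _ n ih =>
      rcases le_or_gt n N with hnN | hNn
      · -- base case : n ≤ N
        have hcast : (n : ℝ) ≤ (N : ℝ) := by exact_mod_cast hnN
        have hsum : S n x ≤ n * M := by
          calc S n x ≤ ∑ _i ∈ range n, M :=
                Finset.sum_le_sum fun i _ => (abs_le.mp (hM _)).2
            _ = n * M := by simp [mul_comm]
        have h1 : (n : ℝ) * M ≤ N * M := mul_le_mul_of_nonneg_right hcast hM0
        have h2 : (n : ℝ) * (ε / N) ≤ (N : ℝ) * (ε / N) :=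
          mul_le_mul_of_nonneg_right hcast (le_of_lt (div_pos hεpos hN0))
        have h3 : (N : ℝ) * (ε / N) = ε := by field_simp
        have h4 : (n : ℝ) * (-ε / N) = -((n : ℝ) * (ε / N)) := by ring
        linarith
      · -- inductive step : n > N
        obtain ⟨m, hm1, hmN, hmS⟩ := hkey x
        have hmn : m < n := lt_of_le_of_lt hmN hNn
        have hsplit : n = m + (n - m) := by omega
        have hnm1 : 1 ≤ n - m := by omega
        have hnmlt : n - m < n := by omega
        rw [hsplit, hcoc m (n - m) x]
        have hih := ih (n - m) hnmlt (φ (m * T) x) hnm1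
        have hcastm : (m : ℝ) ≤ (N : ℝ) := by exact_mod_cast hmN
        have h2 : (m : ℝ) * (ε / N) ≤ (N : ℝ) * (ε / N) :=
          mul_le_mul_of_nonneg_right hcastm (le_of_lt (div_pos hεpos hN0))
        have h3 : (N : ℝ) * (ε / N) = ε := by field_simp
        have hcastsum : ((m + (n - m) : ℕ) : ℝ) = (m : ℝ) + ((n - m : ℕ) : ℝ) := by
          push_cast; ring
        rw [hcastsum]
        have hexp : ((m : ℝ) + ((n - m : ℕ) : ℝ)) * (-ε / N)
            = (m : ℝ) * (-ε / N) + ((n - m : ℕ) : ℝ) * (-ε / N) := by ring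
        rw [hexp]
        have h5 : (m : ℝ) * (-ε / N) = -((m : ℝ) * (ε / N)) := by ring
        linarith
end

section
/- Let X be a C¹ vector field on a compact Riemannian manifold M generating the flow φ_t with derivative (tangent) flow Φ_t. For any τ > 0 there exists a constant C_τ > 0 such that for all t ∈ [−τ, τ] and all regular points x (i.e. X(x) ≠ 0) and all unit vectors v in the normal space N_x = {v ∈ T_x M : v ⟂ X(x)}, the scaled linear Poincaré flow satisfies |ψ*_t(v)| ≤ C_τ, where ψ*_t(v) = (|X(x)|/|X(φ_t(x))|)·ψ_t(v) and ψ_t(v) is the orthogonal projection of Φ_t(v) onto N_{φ_t(x)}. -/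
open Filter RealInnerProductSpace

private lemma proj_norm_le' {E : Type*} [NormedAddCommGroup E] [InnerProductSpace ℝ E]
    (w u : E) : ‖w - ((⟪w, u⟫ : ℝ) / ‖u‖ ^ 2) • u‖ ≤ ‖w‖ := by
  rcases eq_or_ne u 0 with rfl | hu
  · simp
  have hu2 : (0:ℝ) < ‖u‖ ^ 2 := pow_pos (norm_pos_iff.mpr hu) 2
  have h : ‖w - ((⟪w, u⟫ : ℝ) / ‖u‖ ^ 2) • u‖ ^ 2 ≤ ‖w‖ ^ 2 := by
    rw [norm_sub_sq_real, real_inner_smul_right, norm_smul]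
    have h1 : (‖(⟪w, u⟫ : ℝ) / ‖u‖ ^ 2‖ * ‖u‖) ^ 2
        = (⟪w, u⟫ : ℝ) ^ 2 / ‖u‖ ^ 2 := by
      rw [mul_pow, Real.norm_eq_abs, sq_abs, div_pow]
      field_simp
    rw [h1]
    have h2 : (⟪w, u⟫ : ℝ) / ‖u‖ ^ 2 * ⟪w, u⟫ = (⟪w, u⟫ : ℝ) ^ 2 / ‖u‖ ^ 2 := by
      ring
    rw [h2]
    have h3 : (0:ℝ) ≤ (⟪w, u⟫ : ℝ) ^ 2 / ‖u‖ ^ 2 := by positivity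
    linarith
  exact (pow_le_pow_iff_left₀ (norm_nonneg _) (norm_nonneg _) two_ne_zero).mp h

/-- (Boundedness of the scaled linear Poincaré flow on bounded time
intervals.) -/
theorem stmt2 {M : Type*} [MetricSpace M] [CompactSpace M]
    {E : Type*} [NormedAddCommGroup E] [InnerProductSpace ℝ E] [FiniteDimensional ℝ E]
    (φ : ℝ → M → M) (hφ : Continuous fun p : ℝ × M => φ p.1 p.2)
    (hφ0 : ∀ x, φ 0 x = x) (hφadd : ∀ s t x, φ (s + t) x = φ s (φ t x))
    (Φ : ℝ → M → (E →L[ℝ] E))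
    (hΦcont : Continuous fun p : ℝ × M => Φ p.1 p.2)
    (hΦ0 : ∀ x, Φ 0 x = ContinuousLinearMap.id ℝ E)
    (hΦadd : ∀ s t x, Φ (s + t) x = (Φ s (φ t x)).comp (Φ t x))
    (X : M → E) (hX : Continuous X)
    (hequiv : ∀ t x, Φ t x (X x) = X (φ t x))
    (τ : ℝ) (hτ : 0 < τ) :
    ∃ C : ℝ, 0 < C ∧ ∀ t : ℝ, |t| ≤ τ → ∀ x : M, X x ≠ 0 →
      ∀ v : E, (⟪v, X x⟫) = 0 → ‖v‖ = 1 →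
        ‖(‖X x‖ / ‖X (φ t x)‖) •
            (Φ t x v - ((⟪Φ t x v, X (φ t x)⟫) / ‖X (φ t x)‖ ^ 2) • X (φ t x))‖ ≤ C := by
  -- uniform bound on the cocycle norm over the compact set [-τ,τ] × M
  obtain ⟨C, hC⟩ : ∃ C : ℝ, ∀ t ∈ Set.Icc (-τ) τ, ∀ x : M, ‖Φ t x‖ ≤ C := by
    have hcomp : IsCompact (Set.Icc (-τ) τ ×ˢ (Set.univ : Set M)) :=
      isCompact_Icc.prod isCompact_univ
    have hcont : Continuous fun p : ℝ × M => ‖Φ p.1 p.2‖ := hΦcont.norm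
    obtain ⟨C, hC⟩ := (hcomp.image hcont).bddAbove
    exact ⟨C, fun t ht x => hC ⟨(t, x), ⟨ht, trivial⟩, rfl⟩⟩
  set C₁ : ℝ := max C 1 with hC₁
  have hC₁pos : (0:ℝ) < C₁ := lt_of_lt_of_le one_pos (le_max_right _ _)
  have hC₁le : ∀ t ∈ Set.Icc (-τ) τ, ∀ x : M, ‖Φ t x‖ ≤ C₁ :=
    fun t ht x => (hC t ht x).trans (le_max_left _ _)
  refine ⟨C₁ * C₁, mul_pos hC₁pos hC₁pos, ?_⟩
  intro t ht x hx v hv hv1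
  have htmem : t ∈ Set.Icc (-τ) τ := by
    rcases abs_le.mp ht with ⟨h1, h2⟩; exact ⟨h1, h2⟩
  have htmem' : -t ∈ Set.Icc (-τ) τ := by
    rcases abs_le.mp ht with ⟨h1, h2⟩; constructor <;> linarith
  -- the inverse cocycle brings X (φ t x) back to X x
  have hinv : Φ (-t) (φ t x) (X (φ t x)) = X x := by
    have h1 : Φ (-t + t) x = (Φ (-t) (φ t x)).comp (Φ t x) := hΦadd (-t) t x
    have h2 : Φ (-t + t) x = ContinuousLinearMap.id ℝ E := by
      rw [neg_add_cancel]; exact hΦ0 x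
    have h3 := congrArg (fun L : E →L[ℝ] E => L (X x)) (h1.symm.trans h2)
    simp only [ContinuousLinearMap.comp_apply, ContinuousLinearMap.id_apply] at h3
    rw [hequiv t x] at h3
    exact h3
  have hXφ : X (φ t x) ≠ 0 := by
    intro h0
    apply hx
    rw [← hinv, h0, map_zero]
  have hXφpos : (0:ℝ) < ‖X (φ t x)‖ := norm_pos_iff.mpr hXφ
  -- bound the scaling factor
  have hscale : ‖X x‖ / ‖X (φ t x)‖ ≤ C₁ := by
    rw [div_le_iff₀ hXφpos]
    calc ‖X x‖ = ‖Φ (-t) (φ t x) (X (φ t x))‖ := by rw [hinv]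
      _ ≤ ‖Φ (-t) (φ t x)‖ * ‖X (φ t x)‖ := (Φ (-t) (φ t x)).le_opNorm _
      _ ≤ C₁ * ‖X (φ t x)‖ :=
        mul_le_mul_of_nonneg_right (hC₁le (-t) htmem' (φ t x)) (norm_nonneg _)
  -- bound the projected vector
  have hproj : ‖Φ t x v - ((⟪Φ t x v, X (φ t x)⟫ : ℝ) / ‖X (φ t x)‖ ^ 2) • X (φ t x)‖
      ≤ C₁ := by
    refine (proj_norm_le' (Φ t x v) (X (φ t x))).trans ?_
    calc ‖Φ t x v‖ ≤ ‖Φ t x‖ * ‖v‖ := (Φ t x).le_opNorm v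
      _ = ‖Φ t x‖ := by rw [hv1, mul_one]
      _ ≤ C₁ := hC₁le t htmem x
  rw [norm_smul, Real.norm_eq_abs,
    abs_of_nonneg (div_nonneg (norm_nonneg _) (norm_nonneg _))]
  exact mul_le_mul hscale hproj (norm_nonneg _) (le_of_lt hC₁pos)
end

section
/- Let γ be a periodic orbit of a C¹ flow with period τ(γ) that is (C, η, T)-contracting at the period along an invariant bundle E: there exist m ∈ ℕ and, for x ∈ γ, a partition 0 = t_0 < t_1 < ⋯ < t_n = mτ(γ) with t_{i+1} − t_i ≤ T such that ∏_{i=0}^{n−1} ‖ψ_{t_{i+1}−t_i}|_{E(φ_{t_i}(x))}‖ ≤ C·exp(−η·mτ(γ)). Then for every η' ∈ (0, η) there exists N = N(C, T, η, η') > 0 such that if τ(γ) > N, then there exists a point x ∈ γ which is (1, η', T)-contracting: for the partition times s_k along the forward orbit of x obtained by cyclically repeating the given partition, ∏_{i=0}^{k−1} ‖ψ*_{s_{i+1}−s_i}|_{E(φ_{s_i}(x))}‖ ≤ exp(−η' s_k) for all k ≥ 1. -/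
/-!
Pass to logarithms: with weights `b i = log ν_i + η' (t_{i+1} - t_i)`, the contraction at the
period makes the sum of `b` over one period at most `log C - (η - η') m P`, which is nonpositive
once `P > log C / (η - η')`. The partial sums `S l = ∑_{i<l} b i` then satisfy `S (n + l) ≤ S l`,
so an index `j < n` maximising `S` on one period maximises it everywhere, and every forward
partial sum `S (j + k) - S j` starting at `j` is nonpositive.
-/

open Finset Real

theorem exists_forall_sum_range_nonpos_of_periodic {M : Type*} [AddCommGroup M] [LinearOrder M]
    [IsOrderedAddMonoid M] {b : ℕ → M} {n : ℕ} (hn : 0 < n) (hb : ∀ i, b (i + n) = b i)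
    (hsum : ∑ i ∈ range n, b i ≤ 0) : ∃ j < n, ∀ k, ∑ i ∈ range k, b (j + i) ≤ 0 := by
  set S : ℕ → M := fun l => ∑ i ∈ range l, b i with hS
  have hS_period : ∀ l, S (n + l) ≤ S l := fun l => by
    have hS_add : S (n + l) = S n + S l := by
      simp only [hS, sum_range_add]
      congr 1
      exact sum_congr rfl fun i _ => by rw [add_comm, hb]
    rw [hS_add]
    exact add_le_of_nonpos_left hsum
  obtain ⟨j, hj, hj_max⟩ := exists_max_image (range n) S ⟨0, mem_range.2 hn⟩
  have hS_le : ∀ l, S l ≤ S j := by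
    intro l
    induction l using Nat.strong_induction_on with
    | _ l ih =>
      rcases lt_or_ge l n with hl | hl
      · exact hj_max l (mem_range.2 hl)
      · obtain ⟨r, rfl⟩ := Nat.exists_eq_add_of_le hl
        exact (hS_period r).trans (ih r (by omega))
  refine ⟨j, mem_range.1 hj, fun k => ?_⟩
  have hjk : S j + ∑ i ∈ range k, b (j + i) ≤ S j := (sum_range_add b j k).symm.trans_le (hS_le _)
  exact (add_le_iff_nonpos_right _).1 hjk

theorem prod_le_exp_iff_sum_log_le {ι : Type*} {s : Finset ι} {f : ι → ℝ}
    (hf : ∀ i ∈ s, 0 < f i) {x : ℝ} : ∏ i ∈ s, f i ≤ exp x ↔ ∑ i ∈ s, log (f i) ≤ x := by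
  rw [← log_le_iff_le_exp (prod_pos hf), log_prod fun i hi => (hf i hi).ne']

theorem prod_le_exp_neg_mul_iff_sum_nonpos {f t : ℕ → ℝ} (hf : ∀ i, 0 < f i) (c : ℝ)
    (j k : ℕ) :
    ∏ i ∈ range k, f (j + i) ≤ exp (-c * (t (j + k) - t j)) ↔
      ∑ i ∈ range k, (log (f (j + i)) + c * (t (j + i + 1) - t (j + i))) ≤ 0 := by
  have htel : ∑ i ∈ range k, (t (j + i + 1) - t (j + i)) = t (j + k) - t j :=
    sum_range_sub (fun i => t (j + i)) k
  rw [prod_le_exp_iff_sum_log_le fun i _ => hf _, sum_add_distrib, ← mul_sum, htel]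
  constructor <;> intro h <;> linarith

theorem log_sub_mul_nonpos_of_div_lt {c δ P x : ℝ} (hδ : 0 < δ) (hP : (|log c| + 1) / δ < P)
    (hx : P ≤ x) : log c - δ * x ≤ 0 := by
  rw [div_lt_iff₀ hδ] at hP
  nlinarith [le_abs_self (log c)]

-- `ν t s` stands for `‖ψ*_s|_{E(φ_t x)}‖` along the orbit of `x`; the index `j` gives the
-- point `φ_{t_j}(x)`.
theorem stmt6_general (C K T η η' : ℝ) (hC : 0 < C) (hη'η : η' < η) :
    ∃ N : ℝ, 0 < N ∧
      ∀ P : ℝ, N < P →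
      ∀ ν : ℝ → ℝ → ℝ,
        (∀ t s, 0 < ν t s) →
        (∀ t s₁ s₂, 0 ≤ s₁ → 0 ≤ s₂ → ν t (s₁ + s₂) ≤ ν (t + s₁) s₂ * ν t s₁) →
        (∀ t s, ν (t + P) s = ν t s) →
        (∀ t s, 0 ≤ s → s ≤ T → ν t s ≤ K) →
      ∀ (m n : ℕ) (tt : ℕ → ℝ),
        1 ≤ m → 1 ≤ n →
        tt 0 = 0 →
        (∀ i, tt i < tt (i + 1)) →
        (∀ i, tt (i + 1) - tt i ≤ T) →
        (∀ i, tt (i + n) = tt i + m * P) →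
        (∏ i ∈ range n, ν (tt i) (tt (i + 1) - tt i) ≤ C * Real.exp (-η * (m * P))) →
        ∃ j < n, ∀ k : ℕ, 1 ≤ k →
          ∏ i ∈ range k, ν (tt (j + i)) (tt (j + i + 1) - tt (j + i)) ≤
            Real.exp (-η' * (tt (j + k) - tt j)) := by
  have hηη' : 0 < η - η' := sub_pos.2 hη'η
  refine ⟨(|log C| + 1) / (η - η'), by positivity, ?_⟩
  intro P hP ν hν_pos _ hν_per _ m n tt hm hn htt0 _ _ htt_per hprod
  set a : ℕ → ℝ := fun i => ν (tt i) (tt (i + 1) - tt i) with ha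
  have hgap_per : ∀ i, tt (i + n + 1) - tt (i + n) = tt (i + 1) - tt i := fun i => by
    rw [htt_per, add_right_comm, htt_per]
    ring
  have ha_per : ∀ i, a (i + n) = a i := fun i => by
    simp only [ha]
    rw [hgap_per, htt_per]
    exact Function.Periodic.nat_mul (f := (ν · _)) (fun t => hν_per t _) m (tt i)
  have hsum : ∑ i ∈ range n, (log (a i) + η' * (tt (i + 1) - tt i)) ≤ 0 := by
    have hlog : ∑ i ∈ range n, log (a i) ≤ log C + -η * (m * P) :=
      (prod_le_exp_iff_sum_log_le fun i _ => hν_pos _ _).1 (by rwa [exp_add, exp_log hC])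
    have htel : ∑ i ∈ range n, (tt (i + 1) - tt i) = m * P := by
      rw [sum_range_sub, htt0, sub_zero]
      simpa [htt0] using htt_per 0
    have hP_le : P ≤ m * P :=
      le_mul_of_one_le_left (lt_trans (by positivity) hP).le (by exact_mod_cast hm)
    rw [sum_add_distrib, ← mul_sum, htel]
    linarith [log_sub_mul_nonpos_of_div_lt hηη' hP hP_le]
  obtain ⟨j, hj, hj_sum⟩ := exists_forall_sum_range_nonpos_of_periodic hn
    (b := fun i => log (a i) + η' * (tt (i + 1) - tt i))
    (fun i => by simp only [ha_per, hgap_per]) hsum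
  exact ⟨j, hj, fun k _ =>
    (prod_le_exp_neg_mul_iff_sum_nonpos (f := a) (t := tt) (fun _ => hν_pos _ _) η' j k).2
      (hj_sum k)⟩

/-- (Pliss lemma along a periodic orbit, for the scaled linear
Poincaré flow.)  We abstract the norms of the (scaled) linear Poincaré flow along the
periodic orbit `γ` of period `P = τ(γ)` through `x` as a function `ν t s`
(`= ‖ψ*_s|_{E(φ_t(x))}‖`): it is positive, submultiplicative, `P`-periodic in the base
time and bounded by `K` for `0 ≤ s ≤ T`.  Suppose `γ` is `(C,η,T,E)`-contracting at the
period: there are `m ≥ 1` and a partition `0 = t_0 < t_1 < ⋯ < t_n = m·P` (extended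
periodically, with gaps `≤ T`) with `∏_{i<n} ν(t_i)(t_{i+1}−t_i) ≤ C·exp(−η·m·P)`.
Then for every `η' ∈ (0,η)` there is `N = N(C,K,T,η,η') > 0` such that if `P > N` there
is a starting index `j` (i.e. a point `φ_{t_j}(x) ∈ γ`) with all forward partial
products `∏_{i<k} ν(t_{j+i})(t_{j+i+1}−t_{j+i}) ≤ exp(−η'·(t_{j+k}−t_j))`. -/
theorem stmt6 (C K T η η' : ℝ) (hC : 0 < C) (hK : 1 ≤ K) (hT : 0 < T)
    (hη : 0 < η) (hη' : 0 < η') (hη'η : η' < η) :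
    ∃ N : ℝ, 0 < N ∧
      ∀ P : ℝ, N < P →
      ∀ ν : ℝ → ℝ → ℝ,
        (∀ t s, 0 < ν t s) →
        (∀ t s₁ s₂, 0 ≤ s₁ → 0 ≤ s₂ → ν t (s₁ + s₂) ≤ ν (t + s₁) s₂ * ν t s₁) →
        (∀ t s, ν (t + P) s = ν t s) →
        (∀ t s, 0 ≤ s → s ≤ T → ν t s ≤ K) →
      ∀ (m n : ℕ) (tt : ℕ → ℝ),
        1 ≤ m → 1 ≤ n →
        tt 0 = 0 →
        (∀ i, tt i < tt (i + 1)) →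
        (∀ i, tt (i + 1) - tt i ≤ T) →
        (∀ i, tt (i + n) = tt i + m * P) →
        (∏ i ∈ range n, ν (tt i) (tt (i + 1) - tt i) ≤ C * Real.exp (-η * (m * P))) →
        ∃ j < n, ∀ k : ℕ, 1 ≤ k →
          ∏ i ∈ range k, ν (tt (j + i)) (tt (j + i + 1) - tt (j + i)) ≤
            Real.exp (-η' * (tt (j + k) - tt j)) :=
  stmt6_general C K T η η' hC hη'η
end

section
/- (Abstract Pliss lemma for sequences) Let A ≥ 0, and let 0 < η' < η. There exists N ∈ ℕ depending only on A, η, η' such that: for any n ≥ N and any real numbers a_0, …, a_{n−1} with ∑_{i=0}^{n−1} a_i ≤ A − ηn, there exists an index 0 ≤ j ≤ n−1 such that, extending the sequence periodically (a_{i+n} = a_i), one has ∑_{i=j}^{j+k−1} a_i ≤ −η'·k for every k ≥ 1. -/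
open Finset

/-- (Abstract Pliss lemma for periodic sequences.)  Let `A ≥ 0` and
`0 < η' < η`.  There is `N ∈ ℕ`, depending only on `A, η, η'`, such that: for any
`n ≥ N` and any reals `a_0, …, a_{n−1}`, extended `n`-periodically, with
`∑_{i<n} a_i ≤ A − ηn`, there is an index `0 ≤ j ≤ n−1` with
`∑_{i=j}^{j+k−1} a_i ≤ −η'·k` for every `k ≥ 1`. -/
theorem stmt7 (A η η' : ℝ) (hA : 0 ≤ A) (hη' : 0 < η') (hη'η : η' < η) :
    ∃ N : ℕ, ∀ n : ℕ, N ≤ n → ∀ a : ℕ → ℝ,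
      (∀ i, a (i + n) = a i) →
      (∑ i ∈ range n, a i ≤ A - η * n) →
      ∃ j < n, ∀ k : ℕ, 1 ≤ k → ∑ i ∈ range k, a (j + i) ≤ -η' * k := by
  refine ⟨⌈A / (η - η')⌉₊ + 1, fun n hn a hper hsum => ?_⟩
  have hδ : (0:ℝ) < η - η' := by linarith
  have hn1 : 1 ≤ n := le_trans (Nat.le_add_left 1 _) hn
  have hAn : A ≤ (η - η') * n := by
    have h1 : A / (η - η') ≤ (⌈A / (η - η')⌉₊ : ℝ) := Nat.le_ceil _
    have h2 : (⌈A / (η - η')⌉₊ : ℝ) ≤ n := by exact_mod_cast le_trans (Nat.le_succ _) hn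
    calc A = (A / (η - η')) * (η - η') := by field_simp
    _ ≤ (n : ℝ) * (η - η') := by nlinarith
    _ = (η - η') * n := mul_comm _ _
  set S : ℕ → ℝ := fun m => ∑ i ∈ range m, (a i + η') with hS
  have hSn : S n ≤ 0 := by
    have : S n = (∑ i ∈ range n, a i) + η' * n := by
      simp [hS, Finset.sum_add_distrib, mul_comm]
    rw [this]; linarith
  -- sum over a full period is shift invariant
  have hshift : ∀ m, ∑ i ∈ range n, (a (m + i) + η') = S n := by
    intro m
    induction m with
    | zero => simp [hS]
    | succ m ih =>
      rw [← ih]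
      have h1 : ∑ i ∈ range n, (a (m + 1 + i) + η')
          = ∑ i ∈ range n, (a (m + (i + 1)) + η') := by
        apply Finset.sum_congr rfl; intro i _
        congr 2; omega
      rw [h1]
      have h2 : ∑ i ∈ range (n + 1), (a (m + i) + η')
          = (∑ i ∈ range n, (a (m + (i + 1)) + η')) + (a (m + 0) + η') :=
        Finset.sum_range_succ' _ _
      have h3 : ∑ i ∈ range (n + 1), (a (m + i) + η')
          = (∑ i ∈ range n, (a (m + i) + η')) + (a (m + n) + η') :=
        Finset.sum_range_succ _ _
      have h4 : a (m + n) = a m := hper m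
      have := h2.symm.trans h3
      simp only [Nat.add_zero, h4] at this
      linarith
  have hadd : ∀ m, S (m + n) = S m + S n := by
    intro m
    have : S (m + n) = S m + ∑ i ∈ range n, (a (m + i) + η') := by
      simp [hS, Finset.sum_range_add]
    rw [this, hshift]
  have hmul : ∀ q r : ℕ, S (q * n + r) = q * S n + S r := by
    intro q
    induction q with
    | zero => simp
    | succ q ih =>
      intro r
      have h1 : (q + 1) * n + r = (q * n + r) + n := by ring
      rw [h1, hadd, ih]
      push_cast; ring
  -- pick j maximizing S on range n
  obtain ⟨j, hjmem, hjmax⟩ :=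
    Finset.exists_max_image (range n) S ⟨0, Finset.mem_range.mpr hn1⟩
  have hjlt : j < n := Finset.mem_range.mp hjmem
  refine ⟨j, hjlt, fun k hk => ?_⟩
  -- S (j + k) ≤ S j
  have hkey : S (j + k) ≤ S j := by
    have hdecomp : j + k = ((j + k) / n) * n + (j + k) % n := (Nat.div_add_mod' _ _).symm
    rw [hdecomp, hmul]
    have hr : (j + k) % n < n := Nat.mod_lt _ (by omega)
    have h1 : S ((j + k) % n) ≤ S j := hjmax _ (Finset.mem_range.mpr hr)
    have h2 : ((((j + k) / n : ℕ)) : ℝ) * S n ≤ 0 :=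
      mul_nonpos_of_nonneg_of_nonpos (by positivity) hSn
    linarith
  have hexp : S (j + k) = S j + (∑ i ∈ range k, a (j + i)) + η' * k := by
    simp [hS, Finset.sum_range_add, Finset.sum_add_distrib, mul_comm]; push_cast; ring
  have : (∑ i ∈ range k, a (j + i)) + η' * k ≤ 0 := by
    rw [hexp] at hkey; linarith
  linarith [this]
end

section
/- Let Λ be a compact invariant Lyapunov stable set of a flow φ_t on a compact metric space M. Then for each x ∈ Λ, the unstable set W^u(Orb(x)) = { y ∈ M : ∃ an increasing homeomorphism θ : ℝ → ℝ with θ(0) = 0 such that d(φ_{θ(t)}(y), φ_t(x)) → 0 as t → −∞ } is contained in Λ. -/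
open Filter Topology

/-- (Unstable sets of points of a Lyapunov stable compact invariant
set are contained in it.)  `Λ` is Lyapunov stable: every neighborhood `U` of `Λ`
contains a neighborhood `V` of `Λ` with `φ_t(V) ⊆ U` for all `t > 0`.  If `x ∈ Λ` and
`y` lies in the unstable set of the orbit of `x` — i.e. there is a reparametrization
`θ : ℝ → ℝ` (an increasing homeomorphism fixing `0`) with
`d(φ_{θ(t)}(y), φ_t(x)) → 0` as `t → −∞` — then `y ∈ Λ`. -/
theorem stmt10 {M : Type*} [MetricSpace M] [CompactSpace M]
    (φ : ℝ → M → M) (hφ : Continuous fun p : ℝ × M => φ p.1 p.2)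
    (hφ0 : ∀ x, φ 0 x = x) (hφadd : ∀ s t x, φ (s + t) x = φ s (φ t x))
    (Λ : Set M) (hΛc : IsCompact Λ) (hΛinv : ∀ t : ℝ, φ t '' Λ = Λ)
    (hLyap : ∀ U : Set M, IsOpen U → Λ ⊆ U →
      ∃ V : Set M, IsOpen V ∧ Λ ⊆ V ∧ ∀ t : ℝ, 0 < t → φ t '' V ⊆ U) :
    ∀ x ∈ Λ, ∀ y : M,
      (∃ θ : ℝ → ℝ, StrictMono θ ∧ Continuous θ ∧ Function.Surjective θ ∧ θ 0 = 0 ∧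
        Tendsto (fun t => dist (φ (θ t) y) (φ t x)) atBot (𝓝 0)) →
      y ∈ Λ := by
  intro x hx y ⟨θ, hθmono, hθcont, hθsurj, hθ0, hθlim⟩
  -- It suffices to show y lies in every ε-thickening of Λ.
  have key : ∀ ε > 0, y ∈ Metric.thickening ε Λ := by
    intro ε hε
    obtain ⟨V, hVopen, hΛV, hV⟩ := hLyap (Metric.thickening ε Λ)
      Metric.isOpen_thickening (Metric.self_subset_thickening hε Λ)
    obtain ⟨δ, hδ, hδV⟩ := hΛc.exists_thickening_subset_open hVopen hΛV
    -- choose t < 0 with dist (φ (θ t) y) (φ t x) < δ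
    have : ∀ᶠ t in atBot, dist (φ (θ t) y) (φ t x) < δ :=
      hθlim (eventually_lt_nhds hδ)
    obtain ⟨t, ht, htneg⟩ := (this.and (eventually_lt_atBot (0 : ℝ))).exists
    have hxt : φ t x ∈ Λ := (hΛinv t) ▸ Set.mem_image_of_mem _ hx
    have hmem : φ (θ t) y ∈ V :=
      hδV (Metric.mem_thickening_iff.2 ⟨φ t x, hxt, ht⟩)
    have hθt : θ t < 0 := hθ0 ▸ hθmono htneg
    have hy : y = φ (-(θ t)) (φ (θ t) y) := by
      rw [← hφadd, neg_add_cancel, hφ0]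
    rw [hy]
    exact hV (-(θ t)) (by linarith) (Set.mem_image_of_mem _ hmem)
  -- hence y ∈ closure Λ = Λ
  have hclosed : IsClosed Λ := hΛc.isClosed
  have : y ∈ closure Λ := by
    rw [Metric.mem_closure_iff]
    intro ε hε
    obtain ⟨z, hz, hyz⟩ := Metric.mem_thickening_iff.1 (key ε hε)
    exact ⟨z, hz, hyz⟩
  rwa [hclosed.closure_eq] at this
end

section
/- Let σ be a hyperbolic singularity of a C¹ vector field X on M³ whose linearization DX(σ) has three real eigenvalues λ_1 < λ_2 < 0 < λ_3 with λ_2 + λ_3 < 0, and let Γ ∪ {σ} be a compact invariant set where Γ is a homoclinic orbit of σ. Suppose T_{Γ∪σ}M³ = E ⊕ F is a dominated splitting with respect to the tangent flow Φ_t with dim E = 1 and E(σ) equal to the strong stable eigenspace of λ_1. Then, since the unique ergodic invariant probability measure of the flow restricted to Γ ∪ {σ} is the Dirac measure at σ, the bundle E is uniformly contracting: there are C ≥ 1 and λ > 0 with ‖Φ_t|_{E(x)}‖ ≤ C e^{−λt} for all x ∈ Γ ∪ {σ} and t ≥ 0. -/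
/-!
Since `ν 1 σ = e^{λ₁} < 1`, the time-one cocycle contracts by a fixed factor `e^{-c} < 1` on an
open neighbourhood `U` of `σ`. The homoclinic orbit lies in `U` outside a bounded time window
`[-T, T]`, hence every orbit in `Λ` has at most `⌊2T⌋ + 1` unit time steps outside `U`. On those
steps the cocycle is bounded by compactness of `Λ`, and on all others it contracts by `e^{-c}`.
-/

open Filter Topology
open Finset

theorem Finset.card_filter_natCast_mem_Icc_le (s : Finset ℕ) (a b : ℝ) :
    #(s.filter fun k : ℕ => (k : ℝ) ∈ Set.Icc a b) ≤ ⌊b - a⌋₊ + 1 := by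
  calc #(s.filter fun k : ℕ => (k : ℝ) ∈ Set.Icc a b)
      ≤ #(Icc ⌈a⌉₊ (⌈a⌉₊ + ⌊b - a⌋₊)) := by
        refine card_le_card fun k hk => ?_
        obtain ⟨hak, hkb⟩ := (mem_filter.mp hk).2
        have hceil : ⌈a⌉₊ ≤ k := Nat.ceil_le.mpr hak
        have hdiff : ((k - ⌈a⌉₊ : ℕ) : ℝ) ≤ b - a := by
          rw [Nat.cast_sub hceil]
          linarith [Nat.le_ceil a]
        have := Nat.le_floor hdiff
        exact mem_Icc.mpr ⟨hceil, by omega⟩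
    _ = ⌊b - a⌋₊ + 1 := by simp only [Nat.card_Icc]; omega

theorem Finset.prod_le_pow_mul_pow_of_card_filter_lt_le {ι : Type*} (s : Finset ι) (f : ι → ℝ)
    {B ρ : ℝ} {N : ℕ} (hf : ∀ i ∈ s, 0 ≤ f i) (hfB : ∀ i ∈ s, f i ≤ B) (hB : 1 ≤ B)
    (hρ₀ : 0 ≤ ρ) (hρ₁ : ρ ≤ 1) (hN : #{i ∈ s | ρ < f i} ≤ N) :
    ∏ i ∈ s, f i ≤ B ^ N * ρ ^ (#s - N) := by
  have hcard := card_filter_add_card_filter_not (s := s) (fun i => ρ < f i)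
  rw [← prod_filter_mul_prod_filter_not s (fun i => ρ < f i)]
  have hlarge : ∏ i ∈ s with ρ < f i, f i ≤ B ^ N :=
    calc ∏ i ∈ s with ρ < f i, f i
        ≤ ∏ i ∈ s with ρ < f i, B :=
          prod_le_prod (fun i hi => hf i (filter_subset _ _ hi))
            fun i hi => hfB i (filter_subset _ _ hi)
      _ ≤ B ^ N := by rw [prod_const]; exact pow_le_pow_right₀ hB hN
  have hsmall : ∏ i ∈ s with ¬ρ < f i, f i ≤ ρ ^ (#s - N) :=
    calc ∏ i ∈ s with ¬ρ < f i, f i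
        ≤ ∏ i ∈ s with ¬ρ < f i, ρ :=
          prod_le_prod (fun i hi => hf i (filter_subset _ _ hi))
            fun i hi => not_lt.mp (mem_filter.mp hi).2
      _ ≤ ρ ^ (#s - N) := by
          rw [prod_const]; exact pow_le_pow_of_le_one hρ₀ hρ₁ (by omega)
  exact mul_le_mul hlarge hsmall (prod_nonneg fun i hi => hf i (filter_subset _ _ hi))
    (by positivity)

section Cocycle

variable {X : Type*} {φ : ℝ → X → X} {ν : ℝ → X → ℝ}

theorem cocycle_natCast_eq_prod (hν0 : ∀ x, ν 0 x = 1)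
    (hνcoc : ∀ s t x, ν (s + t) x = ν s (φ t x) * ν t x) (n : ℕ) (x : X) :
    ν n x = ∏ k ∈ range n, ν 1 (φ k x) := by
  induction n generalizing x with
  | zero => simpa using hν0 x
  | succ n ih =>
    rw [prod_range_succ, ← ih, mul_comm, Nat.cast_succ, add_comm, hνcoc]

theorem card_filter_flow_orbit_le (hφadd : ∀ s t x, φ (s + t) x = φ s (φ t x)) {p : X → Prop}
    [DecidablePred p] {x₀ : X} {T : ℝ} (hT : ∀ u : ℝ, T ≤ |u| → ¬p (φ u x₀)) (s : ℝ) (n : ℕ) :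
    #((range n).filter fun k : ℕ => p (φ k (φ s x₀))) ≤ ⌊2 * T⌋₊ + 1 :=
  calc #((range n).filter fun k : ℕ => p (φ k (φ s x₀)))
      ≤ #((range n).filter fun k : ℕ => (k : ℝ) ∈ Set.Icc (-s - T) (-s + T)) := by
        refine card_le_card (monotone_filter_right _ fun k _ hk => ?_)
        rw [← hφadd] at hk
        have : |(k : ℝ) + s| < T := not_le.mp fun h => hT _ h hk
        constructor <;> linarith [abs_lt.mp this]
    _ ≤ ⌊2 * T⌋₊ + 1 := by
        convert card_filter_natCast_mem_Icc_le _ _ _ using 3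
        ring

theorem cocycle_le_exp_of_card_filter_le (hν0 : ∀ x, ν 0 x = 1)
    (hνcoc : ∀ s t x, ν (s + t) x = ν s (φ t x) * ν t x) (hνpos : ∀ t x, 0 < ν t x)
    {x : X} {B c : ℝ} {N : ℕ} (hB₁ : 1 ≤ B) (hc : 0 < c)
    (hB : ∀ r ∈ Set.Icc (0 : ℝ) 1, ∀ k : ℕ, ν r (φ k x) ≤ B)
    (hN : ∀ n : ℕ, #((range n).filter fun k : ℕ => Real.exp (-c) < ν 1 (φ k x)) ≤ N)
    {t : ℝ} (ht : 0 ≤ t) :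
    ν t x ≤ B ^ (N + 1) * Real.exp (c * (N + 1)) * Real.exp (-c * t) := by
  set n := ⌊t⌋₊
  have hnt : (n : ℝ) ≤ t := Nat.floor_le ht
  have htn : t < n + 1 := Nat.lt_floor_add_one t
  have hsplit : ν t x = ν (t - n) (φ n x) * ν n x := by rw [← hνcoc, sub_add_cancel]
  have hfrac : ν (t - n) (φ n x) ≤ B := hB _ ⟨by linarith, by linarith⟩ n
  have hint : ν n x ≤ B ^ N * Real.exp (-c) ^ (n - N) := by
    have := prod_le_pow_mul_pow_of_card_filter_lt_le (range n) _ (fun k _ => (hνpos _ _).le)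
      (fun k _ => hB 1 (by norm_num) k) hB₁ (Real.exp_pos _).le
      (Real.exp_le_one_iff.mpr (by linarith)) (hN n)
    rwa [card_range, ← cocycle_natCast_eq_prod hν0 hνcoc] at this
  have hdecay : Real.exp (-c) ^ (n - N) ≤ Real.exp (c * (N + 1)) * Real.exp (-c * t) := by
    rw [← Real.exp_nat_mul, ← Real.exp_add, Real.exp_le_exp]
    have : (n : ℝ) - N ≤ (n - N : ℕ) := by
      rcases le_total N n with h | h
      · rw [Nat.cast_sub h]
      · rw [Nat.sub_eq_zero_of_le h, Nat.cast_zero, sub_nonpos]; exact_mod_cast h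
    nlinarith
  calc ν t x = ν (t - n) (φ n x) * ν n x := hsplit
    _ ≤ B * (B ^ N * (Real.exp (c * (N + 1)) * Real.exp (-c * t))) := by
        gcongr
        · exact (hνpos _ _).le
        · exact hint.trans (by gcongr)
    _ = B ^ (N + 1) * Real.exp (c * (N + 1)) * Real.exp (-c * t) := by ring

end Cocycle

theorem stmt14_general {M : Type*} [MetricSpace M]
    (φ : ℝ → M → M)
    (hφadd : ∀ s t x, φ (s + t) x = φ s (φ t x))
    (σ x₀ : M) (hσfix : ∀ t : ℝ, φ t σ = σ)
    (Λ : Set M) (hΛ : Λ = insert σ (Set.range fun t : ℝ => φ t x₀))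
    (hΛcomp : IsCompact Λ)
    (hhomoω : Tendsto (fun t : ℝ => φ t x₀) atTop (𝓝 σ))
    (hhomoα : Tendsto (fun t : ℝ => φ t x₀) atBot (𝓝 σ))
    (lam₁ lam₂ : ℝ) (h12 : lam₁ < lam₂) (h20 : lam₂ < 0)
    (ν : ℝ → M → ℝ) (hνc : Continuous fun p : ℝ × M => ν p.1 p.2)
    (hνpos : ∀ t x, 0 < ν t x) (hν0 : ∀ x, ν 0 x = 1)
    (hνcoc : ∀ s t x, ν (s + t) x = ν s (φ t x) * ν t x)
    (hνσ : ∀ t : ℝ, ν t σ = Real.exp (lam₁ * t)) :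
    ∃ C : ℝ, 1 ≤ C ∧ ∃ lam : ℝ, 0 < lam ∧
      ∀ x ∈ Λ, ∀ t : ℝ, 0 ≤ t → ν t x ≤ C * Real.exp (-lam * t) := by
  obtain ⟨c, hc, hcσ⟩ : ∃ c : ℝ, 0 < c ∧ lam₁ < -c := ⟨-lam₁ / 2, by linarith, by linarith⟩
  set U := {y | ν 1 y < Real.exp (-c)}
  have hσU : σ ∈ U := by simpa [U, hνσ] using hcσ
  have hUopen : IsOpen U :=
    isOpen_lt (hνc.comp (continuous_const.prodMk continuous_id)) continuous_const
  obtain ⟨T, -, hT⟩ : ∃ T, True ∧ ∀ u : ℝ, T ≤ |u| → ν 1 (φ u x₀) < Real.exp (-c) := by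
    refine (atTop_basis.comap abs).eventually_iff.mp ?_
    rw [comap_abs_atTop]
    exact (hhomoα.sup hhomoω).eventually (hUopen.mem_nhds hσU)
  have hΛinv : ∀ x ∈ Λ, ∀ t, φ t x ∈ Λ := by
    rintro x hx t
    rcases hΛ ▸ hx with rfl | ⟨s, rfl⟩
    · rwa [hσfix]
    · exact hΛ ▸ Set.mem_insert_of_mem _ ⟨t + s, hφadd t s x₀⟩
  obtain ⟨N, hN⟩ : ∃ N : ℕ, ∀ x ∈ Λ, ∀ n : ℕ,
      #((range n).filter fun k : ℕ => Real.exp (-c) < ν 1 (φ k x)) ≤ N := by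
    refine ⟨⌊2 * T⌋₊ + 1, fun x hx n => ?_⟩
    rcases hΛ ▸ hx with rfl | ⟨s, rfl⟩
    · rw [filter_eq_empty_iff.mpr fun k _ => by rw [hσfix]; exact hσU.not_gt, card_empty]
      exact Nat.zero_le _
    · exact card_filter_flow_orbit_le hφadd (p := fun y => Real.exp (-c) < ν 1 y)
        (fun u hu => (hT u hu).not_gt) s n
  obtain ⟨B, hB⟩ := (isCompact_Icc.prod hΛcomp).exists_bound_of_continuousOn hνc.continuousOn
  refine ⟨max B 1 ^ (N + 1) * Real.exp (c * (N + 1)),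
    one_le_mul_of_one_le_of_one_le (one_le_pow₀ (le_max_right _ _))
      (Real.one_le_exp (by positivity)),
    c, hc, fun x hx t ht => ?_⟩
  refine cocycle_le_exp_of_card_filter_le hν0 hνcoc hνpos (le_max_right _ _) hc
    (fun r hr k => ?_) (hN x hx) ht
  exact (Real.le_norm_self _).trans ((hB (r, φ k x) ⟨hr, hΛinv x hx k⟩).trans (le_max_left _ _))

/-- (Uniform contraction of the dominated one-dimensional bundle over
a homoclinic loop of a Lorenz-like singularity.)  `Λ = Γ ∪ {σ}` where `σ` is a fixed
point of the flow and `Γ` is a homoclinic orbit of `σ` (the orbit of `x₀ ≠ σ` with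
`φ_t(x₀) → σ` as `t → ±∞`).  The eigenvalues of `DX(σ)` are real with
`λ₁ < λ₂ < 0 < λ₃` and `λ₂ + λ₃ < 0`.  The norm of the tangent flow on the
one-dimensional bundle `E` of the dominated splitting `E ⊕ F` is abstracted as a
continuous positive multiplicative cocycle `ν t x = ‖Φ_t|_{E(x)}‖`, with
`ν t σ = e^{λ₁ t}` since `E(σ)` is the strong stable eigenspace; domination is
abstracted by the cocycle `νF t y = ‖Φ_{−t}|_{F(y)}‖` via
`ν t x · νF t (φ_t x) ≤ C₀ e^{−λ₀ t}`.  Since the unique ergodic (hence the unique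
invariant) probability measure of `φ|_Λ` is `δ_σ`, the bundle `E` is uniformly
contracting: there are `C ≥ 1` and `λ > 0` with `ν t x ≤ C e^{−λ t}` on `Λ`. -/
theorem stmt14 {M : Type*} [MetricSpace M] [CompactSpace M]
    (φ : ℝ → M → M) (hφ : Continuous fun p : ℝ × M => φ p.1 p.2)
    (hφ0 : ∀ x, φ 0 x = x) (hφadd : ∀ s t x, φ (s + t) x = φ s (φ t x))
    (σ x₀ : M) (hx₀ : x₀ ≠ σ) (hσfix : ∀ t : ℝ, φ t σ = σ)
    (Λ : Set M) (hΛ : Λ = insert σ (Set.range fun t : ℝ => φ t x₀))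
    (hΛcomp : IsCompact Λ)
    (hhomoω : Tendsto (fun t : ℝ => φ t x₀) atTop (𝓝 σ))
    (hhomoα : Tendsto (fun t : ℝ => φ t x₀) atBot (𝓝 σ))
    (lam₁ lam₂ lam₃ : ℝ) (h12 : lam₁ < lam₂) (h20 : lam₂ < 0) (h03 : 0 < lam₃)
    (h23 : lam₂ + lam₃ < 0)
    (ν : ℝ → M → ℝ) (hνc : Continuous fun p : ℝ × M => ν p.1 p.2)
    (hνpos : ∀ t x, 0 < ν t x) (hν0 : ∀ x, ν 0 x = 1)
    (hνcoc : ∀ s t x, ν (s + t) x = ν s (φ t x) * ν t x)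
    (hνσ : ∀ t : ℝ, ν t σ = Real.exp (lam₁ * t))
    -- the splitting `E ⊕ F` is dominated:
    (νF : ℝ → M → ℝ) (hνFpos : ∀ t x, 0 < νF t x)
    (C₀ lam₀ : ℝ) (hC₀ : 1 ≤ C₀) (hlam₀ : 0 < lam₀)
    (hdom : ∀ x ∈ Λ, ∀ t : ℝ, 0 ≤ t → ν t x * νF t (φ t x) ≤ C₀ * Real.exp (-lam₀ * t))
    -- the unique invariant probability measure on `Λ` is the Dirac mass at `σ`:
    [MeasurableSpace M] [BorelSpace M]
    (huniq : ∀ μ : MeasureTheory.Measure M, MeasureTheory.IsProbabilityMeasure μ →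
      μ Λᶜ = 0 → (∀ t : ℝ, MeasureTheory.MeasurePreserving (φ t) μ μ) →
      μ = MeasureTheory.Measure.dirac σ) :
    ∃ C : ℝ, 1 ≤ C ∧ ∃ lam : ℝ, 0 < lam ∧
      ∀ x ∈ Λ, ∀ t : ℝ, 0 ≤ t → ν t x ≤ C * Real.exp (-lam * t) :=
  stmt14_general φ hφadd σ x₀ hσfix Λ hΛ hΛcomp hhomoω hhomoα lam₁ lam₂ h12 h20 ν hνc hνpos hν0
    hνcoc hνσ
end

section
/- Let Λ be a compact invariant set of a C¹ vector field X on M³ admitting a continuous invariant (under the tangent flow Φ_t) splitting T_Λ M³ = E^{ss} ⊕ E^{cu} with dim E^{ss} = 1, E^{ss} uniformly contracting, and the splitting dominated. Suppose every point x ∈ Λ satisfies: the α-limit set α(x) is a proper compact invariant subset of Λ on which E^{cu} is area-expanding (i.e. lim_{t→∞} |det Φ_{−t}|_{E^{cu}(y)}| = 0 for y with α-orbit in that subset, uniformly in the sense that each proper invariant subset is singular hyperbolic). Then Λ itself is singular hyperbolic: E^{cu} is area-expanding on all of Λ, i.e. there are C ≥ 1 and λ > 0 with |det Φ_{−t}|_{E^{cu}(x)}|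 ≤ C e^{−λt} for all x ∈ Λ and t ≥ 0. -/
/-!
Write `g t x = |det Φ_{-t}|_{E^{cu}(x)}|`, a multiplicative cocycle over the backward flow.
Decay of `g` on `α(x)` makes `g s < θ < 1` on a neighbourhood of `α(x)`, which the backward orbit
of `x` eventually enters by compactness of `Λ`; iterating the cocycle along the orbit gives a
time `τ > 0` with `g τ x < 1`. A second compactness argument makes `τ ∈ [ε, ε⁻¹]` and the
contraction factor `1 - ε` uniform on `Λ`, and iterating the cocycle once more turns these uniform
contraction steps into exponential decay.
-/

open Filter Topology Set

/-- The α-limit set of a point under a flow on a metric space. -/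
def alphaSet {M : Type*} [MetricSpace M] (φ : ℝ → M → M) (x : M) : Set M :=
  {y | ∀ ε > (0 : ℝ), ∀ T : ℝ, ∃ t ≥ T, dist (φ (-t) x) y < ε}

theorem mem_alphaSet_of_mapClusterPt {M : Type*} [MetricSpace M] {φ : ℝ → M → M} {x y : M}
    (h : MapClusterPt y atTop fun t => φ (-t) x) : y ∈ alphaSet φ x := fun _ hε T =>
  frequently_atTop.1 (mapClusterPt_iff_frequently.1 h _ (Metric.ball_mem_nhds y hε)) T

theorem eventually_mem_of_alphaSet_subset {M : Type*} [MetricSpace M] {φ : ℝ → M → M} {x : M}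
    {K U : Set M} (hK : IsCompact K) (hxK : ∀ᶠ t in atTop, φ (-t) x ∈ K) (hU : IsOpen U)
    (hαU : alphaSet φ x ⊆ U) : ∀ᶠ t in atTop, φ (-t) x ∈ U :=
  hK.tendsto_nhdsSet_of_mapClusterPt (s' := alphaSet φ x) hxK
    (fun _ _ hy => mem_alphaSet_of_mapClusterPt hy) (hU.mem_nhdsSet.2 hαU)

def IsMulCocycle {M : Type*} (ψ : ℝ → M → M) (g : ℝ → M → ℝ) : Prop :=
  ∀ s t x, g (s + t) x = g s (ψ t x) * g t x

section Cocycle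

variable {M : Type*} {ψ : ℝ → M → M} {g : ℝ → M → ℝ}

theorem IsMulCocycle.exists_pos_lt_one_of_eventually_le (hcoc : IsMulCocycle ψ g)
    (hgnn : ∀ t x, 0 ≤ g t x) {x : M} {s θ : ℝ} (hs : 0 < s) (hθ : θ < 1)
    (h : ∀ᶠ t in atTop, g s (ψ t x) ≤ θ) : ∃ τ > 0, g τ x < 1 := by
  obtain ⟨T, hT⟩ := eventually_atTop.1 (h.and (eventually_ge_atTop 0))
  have hθ0 : 0 ≤ θ := (hgnn _ _).trans (hT T le_rfl).1
  have hpow : ∀ n : ℕ, g (n * s + T) x ≤ θ ^ n * g T x := by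
    intro n
    induction n with
    | zero => simp
    | succ n ih =>
      have hnsT : T ≤ n * s + T := le_add_of_nonneg_left (by positivity)
      calc g ((n + 1 : ℕ) * s + T) x = g s (ψ (n * s + T) x) * g (n * s + T) x := by
            rw [← hcoc]; push_cast; ring_nf
        _ ≤ θ * (θ ^ n * g T x) :=
            mul_le_mul (hT _ hnsT).1 ih (hgnn _ _) hθ0
        _ = θ ^ (n + 1) * g T x := by ring
  have hlim : Tendsto (fun n : ℕ => θ ^ n * g T x) atTop (𝓝 0) := by
    simpa using (tendsto_pow_atTop_nhds_zero_of_lt_one hθ0 hθ).mul_const (g T x)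
  obtain ⟨n, hn1, hn⟩ :=
    ((eventually_ge_atTop 1).and (hlim.eventually (gt_mem_nhds one_pos))).exists
  have hn1 : (1 : ℝ) ≤ n := by exact_mod_cast hn1
  exact ⟨n * s + T, by nlinarith [(hT T le_rfl).2], (hpow n).trans_lt hn⟩

theorem IsCompact.exists_uniform_contraction [TopologicalSpace M] {K : Set M} (hK : IsCompact K)
    (hgc : ∀ τ, Continuous (g τ)) (h : ∀ x ∈ K, ∃ τ > 0, g τ x < 1) :
    ∃ ε, 0 < ε ∧ ε < 1 ∧ ∀ x ∈ K, ∃ τ ∈ Icc ε ε⁻¹, g τ x < 1 - ε := by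
  set e : ℕ → ℝ := fun n => ((n : ℝ) + 2)⁻¹
  have he0 : ∀ n, 0 < e n := fun n => by positivity
  have he_anti : Antitone e := fun m n hmn => by
    simp only [e]
    gcongr
  have he_lim : Tendsto e atTop (𝓝 0) :=
    tendsto_inv_atTop_zero.comp (tendsto_natCast_atTop_atTop.atTop_add tendsto_const_nhds)
  let U : ℕ → Set M := fun n => ⋃ τ ∈ Icc (e n) (e n)⁻¹, {z | g τ z < 1 - e n}
  have hU_mono : Monotone U := fun m n hmn =>
    biUnion_mono (Icc_subset_Icc (he_anti hmn) (inv_anti₀ (he0 n) (he_anti hmn)))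
      fun τ _ z (hz : g τ z < 1 - e m) => show g τ z < 1 - e n by linarith [he_anti hmn]
  have hcover : K ⊆ ⋃ n, U n := by
    intro x hx
    obtain ⟨τ, hτ, hgτ⟩ := h x hx
    obtain ⟨n, hnτ, hnτ', hng⟩ := ((he_lim.eventually (gt_mem_nhds hτ)).and
      ((he_lim.eventually (gt_mem_nhds (inv_pos.2 hτ))).and
        (he_lim.eventually (gt_mem_nhds (sub_pos.2 hgτ))))).exists
    exact mem_iUnion.2 ⟨n, mem_biUnion ⟨hnτ.le, (le_inv_comm₀ hτ (he0 n)).2 hnτ'.le⟩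
      (show g τ x < 1 - e n by linarith)⟩
  obtain ⟨n, hn⟩ := hK.elim_directed_cover U
    (fun n => isOpen_biUnion fun τ _ => isOpen_lt (hgc τ) continuous_const) hcover
    hU_mono.directed_le
  refine ⟨e n, he0 n, ?_, fun x hx => by simpa [U] using hn hx⟩
  exact inv_lt_one_of_one_lt₀ (by linarith [(n.cast_nonneg : (0 : ℝ) ≤ n)])

theorem IsMulCocycle.le_div_mul_exp_of_uniform_contraction (hcoc : IsMulCocycle ψ g)
    (hgnn : ∀ t x, 0 ≤ g t x) {K : Set M} (hψK : ∀ t, 0 ≤ t → MapsTo (ψ t) K K)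
    {m N θ B : ℝ} (hm : 0 < m) (hN : 0 < N) (hθ0 : 0 < θ) (hθ1 : θ ≤ 1)
    (hB : ∀ x ∈ K, ∀ t ∈ Icc 0 N, g t x ≤ B) (hstep : ∀ x ∈ K, ∃ τ ∈ Icc m N, g τ x ≤ θ)
    {x : M} (hx : x ∈ K) {t : ℝ} (ht : 0 ≤ t) :
    g t x ≤ B / θ * Real.exp (Real.log θ / N * t) := by
  set c := Real.log θ / N
  have hθ_le_exp : ∀ s ≤ N, θ ≤ Real.exp (c * s) := fun s hs =>
    calc θ = Real.exp (c * N) := by rw [div_mul_cancel₀ _ hN.ne', Real.exp_log hθ0]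
      _ ≤ Real.exp (c * s) := Real.exp_le_exp.2 <| mul_le_mul_of_nonpos_left hs <|
          div_nonpos_of_nonpos_of_nonneg (Real.log_nonpos hθ0.le hθ1) hN.le
  have hB0 : 0 ≤ B := (hgnn 0 x).trans (hB x hx 0 ⟨le_rfl, hN.le⟩)
  have hnear : ∀ x ∈ K, ∀ t ∈ Icc 0 N, g t x ≤ B / θ * Real.exp (c * t) := fun x hx t ht =>
    calc g t x ≤ B / θ * θ := by rw [div_mul_cancel₀ _ hθ0.ne']; exact hB x hx t ht
      _ ≤ B / θ * Real.exp (c * t) := by gcongr; exact hθ_le_exp t ht.2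
  suffices ∀ n : ℕ, ∀ x ∈ K, ∀ t ∈ Icc 0 (n * m), g t x ≤ B / θ * Real.exp (c * t) by
    obtain ⟨n, hn⟩ := exists_nat_ge (t / m)
    exact this n x hx t ⟨ht, (div_le_iff₀ hm).1 hn⟩
  intro n
  induction n with
  | zero =>
    rintro x hx t ⟨ht0, ht⟩
    rw [Nat.cast_zero, zero_mul] at ht
    exact hnear x hx t ⟨ht0, ht.trans hN.le⟩
  | succ n ih =>
    rintro x hx t ⟨ht0, htn⟩
    rcases le_or_gt t N with htN | hNt
    · exact hnear x hx t ⟨ht0, htN⟩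
    obtain ⟨τ, ⟨hmτ, hτN⟩, hgτ⟩ := hstep x hx
    have hrest : t - τ ∈ Icc 0 (n * m) := ⟨by linarith, by push_cast at htn; linarith⟩
    calc g t x = g (t - τ) (ψ τ x) * g τ x := by rw [← hcoc, sub_add_cancel]
      _ ≤ B / θ * Real.exp (c * (t - τ)) * Real.exp (c * τ) :=
          mul_le_mul (ih _ (hψK τ (by linarith) hx) _ hrest) (hgτ.trans (hθ_le_exp τ hτN))
            (hgnn _ _) (by positivity)
      _ = B / θ * Real.exp (c * t) := by rw [mul_assoc, ← Real.exp_add]; ring_nf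

theorem IsMulCocycle.exists_exp_decay_of_forall_exists_lt_one [TopologicalSpace M]
    (hcoc : IsMulCocycle ψ g) (hgnn : ∀ t x, 0 ≤ g t x)
    (hgc : Continuous fun p : ℝ × M => g p.1 p.2)
    {K : Set M} (hK : IsCompact K) (hψK : ∀ t, 0 ≤ t → MapsTo (ψ t) K K)
    (h : ∀ x ∈ K, ∃ τ > 0, g τ x < 1) :
    ∃ C : ℝ, 1 ≤ C ∧ ∃ lam : ℝ, 0 < lam ∧
      ∀ x ∈ K, ∀ t : ℝ, 0 ≤ t → g t x ≤ C * Real.exp (-lam * t) := by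
  obtain ⟨ε, hε0, hε1, hstep⟩ :=
    hK.exists_uniform_contraction (fun τ => hgc.comp (continuous_const.prodMk continuous_id)) h
  obtain ⟨B, hB⟩ :=
    (isCompact_Icc (a := 0) (b := ε⁻¹)).prod hK |>.bddAbove_image hgc.continuousOn
  have hlog : Real.log (1 - ε) < 0 := Real.log_neg (by linarith) (by linarith)
  refine ⟨max 1 (B / (1 - ε)), le_max_left _ _, -(Real.log (1 - ε) / ε⁻¹),
    neg_pos.2 (div_neg_of_neg_of_pos hlog (inv_pos.2 hε0)), fun x hx t ht => ?_⟩
  calc g t x ≤ B / (1 - ε) * Real.exp (Real.log (1 - ε) / ε⁻¹ * t) :=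
        hcoc.le_div_mul_exp_of_uniform_contraction hgnn hψK hε0 (inv_pos.2 hε0) (by linarith)
          (by linarith) (fun x hx t ht => hB ⟨(t, x), ⟨ht, hx⟩, rfl⟩)
          (fun x hx => (hstep x hx).imp fun _ ⟨hτ, hg⟩ => ⟨hτ, hg.le⟩) hx ht
    _ ≤ _ := by rw [neg_neg]; gcongr; exact le_max_right _ _

end Cocycle

theorem stmt16_general {M : Type*} [MetricSpace M] (φ : ℝ → M → M)
    (Λ : Set M) (hΛcomp : IsCompact Λ) (hΛinv : ∀ t : ℝ, φ t '' Λ = Λ)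
    -- the backward area cocycle on `E^{cu}`:
    (g : ℝ → M → ℝ) (hgc : Continuous fun p : ℝ × M => g p.1 p.2) (hgpos : ∀ t x, 0 < g t x)
    (hgcoc : ∀ s t x, g (s + t) x = g s (φ (-t) x) * g t x)
    -- every α-limit set is a proper invariant subset which is singular hyperbolic:
    (halpha : ∀ x ∈ Λ, alphaSet φ x ⊆ Λ ∧ alphaSet φ x ≠ Λ ∧
      ∃ C : ℝ, 1 ≤ C ∧ ∃ lam : ℝ, 0 < lam ∧
        ∀ y ∈ alphaSet φ x, ∀ t : ℝ, 0 ≤ t → g t y ≤ C * Real.exp (-lam * t)) :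
    ∃ C : ℝ, 1 ≤ C ∧ ∃ lam : ℝ, 0 < lam ∧
      ∀ x ∈ Λ, ∀ t : ℝ, 0 ≤ t → g t x ≤ C * Real.exp (-lam * t) := by
  have hcoc : IsMulCocycle (fun t => φ (-t)) g := hgcoc
  have hgnn : ∀ t x, 0 ≤ g t x := fun t x => (hgpos t x).le
  have hΛφ : ∀ t, MapsTo (φ t) Λ Λ := fun t x hx => hΛinv t ▸ mem_image_of_mem (φ t) hx
  refine hcoc.exists_exp_decay_of_forall_exists_lt_one hgnn hgc hΛcomp (fun t _ => hΛφ (-t))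
    fun x hx => ?_
  obtain ⟨-, -, C, -, lam, hlam, hdecay⟩ := halpha x hx
  obtain ⟨s, hs, hCs⟩ : ∃ s > 0, C * Real.exp (-lam * s) < 1 := by
    have hlim : Tendsto (fun s => C * Real.exp (-lam * s)) atTop (𝓝 0) := by
      simpa using (Real.tendsto_exp_neg_atTop_nhds_zero.comp
        (tendsto_id.const_mul_atTop hlam)).const_mul C
    exact ((eventually_gt_atTop 0).and (hlim.eventually (gt_mem_nhds one_pos))).exists
  obtain ⟨θ, hCθ, hθ1⟩ := exists_between hCs
  refine hcoc.exists_pos_lt_one_of_eventually_le hgnn hs hθ1 ?_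
  have hα : alphaSet φ x ⊆ {z | g s z < θ} := fun y hy => (hdecay y hy s hs.le).trans_lt hCθ
  filter_upwards [eventually_mem_of_alphaSet_subset hΛcomp
    (Eventually.of_forall fun t => hΛφ (-t) hx)
    (isOpen_lt (hgc.comp (continuous_const.prodMk continuous_id)) continuous_const) hα]
    with t ht using ht.le

/-- (Singular hyperbolicity from singular hyperbolicity of all proper
α-limit sets.)  `Λ` is a compact invariant set of a flow with a dominated partially
hyperbolic splitting `E^{ss} ⊕ E^{cu}`, `dim E^{ss} = 1`, abstracted by cocycles:
`a t x = ‖Φ_t|_{E^{ss}(x)}‖` (uniformly contracting), `b t x = ‖Φ_{−t}|_{E^{cu}(x)}‖`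
(dominated by `a`), and the backward area cocycle
`g t x = |det Φ_{−t}|_{E^{cu}(x)}|`.  If every `x ∈ Λ` has a proper α-limit set on
which `g` decays uniformly exponentially (each proper invariant subset is singular
hyperbolic), then `Λ` itself is singular hyperbolic: `E^{cu}` is area-expanding on all
of `Λ`, i.e. `g t x ≤ C e^{−λ t}` for all `x ∈ Λ`, `t ≥ 0`. -/
theorem stmt16 {M : Type*} [MetricSpace M] [CompactSpace M]
    (φ : ℝ → M → M) (hφ : Continuous fun p : ℝ × M => φ p.1 p.2)
    (hφ0 : ∀ x, φ 0 x = x) (hφadd : ∀ s t x, φ (s + t) x = φ s (φ t x))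
    (Λ : Set M) (hΛne : Λ.Nonempty) (hΛcomp : IsCompact Λ)
    (hΛinv : ∀ t : ℝ, φ t '' Λ = Λ)
    -- the partially hyperbolic splitting, via norm cocycles:
    (a : ℝ → M → ℝ) (hapos : ∀ t x, 0 < a t x)
    (C₁ lam₁ : ℝ) (hC₁ : 1 ≤ C₁) (hlam₁ : 0 < lam₁)
    (hss : ∀ x ∈ Λ, ∀ t : ℝ, 0 ≤ t → a t x ≤ C₁ * Real.exp (-lam₁ * t))
    (b : ℝ → M → ℝ) (hbpos : ∀ t x, 0 < b t x)
    (Cd lamd : ℝ) (hCd : 1 ≤ Cd) (hlamd : 0 < lamd)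
    (hdom : ∀ x ∈ Λ, ∀ t : ℝ, 0 ≤ t → a t x * b t (φ t x) ≤ Cd * Real.exp (-lamd * t))
    -- the backward area cocycle on `E^{cu}`:
    (g : ℝ → M → ℝ) (hgc : Continuous fun p : ℝ × M => g p.1 p.2)
    (hgpos : ∀ t x, 0 < g t x) (hg0 : ∀ x, g 0 x = 1)
    (hgcoc : ∀ s t x, g (s + t) x = g s (φ (-t) x) * g t x)
    -- every α-limit set is a proper invariant subset which is singular hyperbolic:
    (halpha : ∀ x ∈ Λ, alphaSet φ x ⊆ Λ ∧ alphaSet φ x ≠ Λ ∧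
      ∃ C : ℝ, 1 ≤ C ∧ ∃ lam : ℝ, 0 < lam ∧
        ∀ y ∈ alphaSet φ x, ∀ t : ℝ, 0 ≤ t → g t y ≤ C * Real.exp (-lam * t)) :
    ∃ C : ℝ, 1 ≤ C ∧ ∃ lam : ℝ, 0 < lam ∧
      ∀ x ∈ Λ, ∀ t : ℝ, 0 ≤ t → g t x ≤ C * Real.exp (-lam * t) :=
  stmt16_general φ Λ hΛcomp hΛinv g hgc hgpos hgcoc halpha
end

section
/- Let Λ be a compact invariant set of a flow φ_t with a Φ_t-dominated splitting T_Λ M = E ⊕ F where dim E = 1 and the flow direction X(x) lies in F(x) at every regular point x ∈ Λ. Define f(x) = log ‖Φ_T|_{E(x)}‖ for a fixed T > 0 realizing the domination with constant 1/2. Then for every x ∈ Λ whose ω-limit set contains a regular point, liminf_{n→∞} (1/n) ∑_{ℓ=0}^{n−1} f(φ_{ℓT}(x)) ≤ −log 2 + 0 < 0. More precisely: if a ∈ ω(x) is regular and U_a is a neighborhood of a on which 1/2 ≤ |X(z)|/|X(y)| ≤ 2 for z, y ∈ U_a, then choosing return times t_n with φ_{t_n}(x) → a, the averaged sums satisfy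 (1/k)∑_{ℓ=0}^{k−1} f(φ_{ℓT}(x_0)) ≤ −log 2 + o(1) along the subsequence, for a suitable point x_0 on the forward orbit of x in U_a. -/
open Filter Topology Finset

/-- The ω-limit set of a point under a flow on a metric space. -/
def omegaSet' {M : Type*} [MetricSpace M] (φ : ℝ → M → M) (x : M) : Set M :=
  {y | ∀ ε > (0 : ℝ), ∀ T₀ : ℝ, ∃ t ≥ T₀, dist (φ t x) y < ε}

/-- (Negative Birkhoff liminf along the dominated one-dimensional
bundle.)  `Λ` is a compact invariant set with a `Φ_t`-dominated splitting `E ⊕ F`,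
`dim E = 1`, the flow direction lying in `F`.  Abstraction: `nX x = |X(x)|` (so `x` is
regular iff `nX x ≠ 0`, singularities are fixed points), `e x = ‖Φ_T|_{E(x)}‖`, and the
domination with constant `1/2` together with `X(x) ∈ F(x)` gives
`e x ≤ (1/2)·|X(φ_T x)|/|X(x)|` at regular points.  Then for every `x ∈ Λ` whose
ω-limit set contains a regular point, the Birkhoff averages of
`f = log e` satisfy `liminf_n (1/n) ∑_{ℓ<n} f(φ_{ℓT}(x)) < 0`. -/
theorem stmt17 {M : Type*} [MetricSpace M] [CompactSpace M]
    (φ : ℝ → M → M) (hφ : Continuous fun p : ℝ × M => φ p.1 p.2)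
    (hφ0 : ∀ x, φ 0 x = x) (hφadd : ∀ s t x, φ (s + t) x = φ s (φ t x))
    (Λ : Set M) (hΛcomp : IsCompact Λ) (hΛinv : ∀ t : ℝ, φ t '' Λ = Λ)
    (T : ℝ) (hT : 0 < T)
    (nX : M → ℝ) (hnXc : Continuous nX) (hnX0 : ∀ x, 0 ≤ nX x)
    (hsing : ∀ x, nX x = 0 → ∀ t : ℝ, φ t x = x)
    (hreg : ∀ x (t : ℝ), nX x ≠ 0 → nX (φ t x) ≠ 0)
    (e : M → ℝ) (hec : Continuous e) (hepos : ∀ x, 0 < e x)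
    (hdom : ∀ x ∈ Λ, nX x ≠ 0 → e x ≤ (1 / 2) * (nX (φ T x) / nX x)) :
    ∀ x ∈ Λ, (∃ a ∈ omegaSet' φ x, nX a ≠ 0) →
      Filter.liminf
        (fun n : ℕ => (∑ l ∈ range n, Real.log (e (φ (l * T) x))) / n) atTop < 0 := by

  rintro x hxΛ ⟨a, ha, hna⟩
  by_cases hx : nX x = 0
  · exfalso
    have hax : a = x := by
      by_contra hne
      have hd : 0 < dist x a := dist_pos.mpr (Ne.symm hne)
      obtain ⟨t, -, h⟩ := ha (dist x a) hd 0
      rw [hsing x hx t] at h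
      exact lt_irrefl _ h
    exact hna (hax ▸ hx)
  -- main case: x is regular
  haveI : Nonempty M := ⟨x⟩
  set z : ℕ → M := fun n => φ (n * T) x with hzdef
  have zmem : ∀ n, z n ∈ Λ := by
    intro n
    have := hΛinv ((n : ℝ) * T)
    rw [← this]
    exact Set.mem_image_of_mem _ hxΛ
  have zreg : ∀ n, nX (z n) ≠ 0 := fun n => hreg x _ hx
  have zpos : ∀ n, 0 < nX (z n) := fun n => (hnX0 _).lt_of_ne (Ne.symm (zreg n))
  have hstep : ∀ n : ℕ, φ T (z n) = z (n + 1) := by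
    intro n
    simp only [hzdef]
    rw [← hφadd]
    congr 1
    push_cast
    ring
  set g : ℕ → ℝ := fun n => Real.log (nX (z n)) with hgdef
  have key : ∀ l : ℕ, Real.log (e (z l)) ≤ -Real.log 2 + (g (l + 1) - g l) := by
    intro l
    have hd := hdom (z l) (zmem l) (zreg l)
    rw [hstep l] at hd
    have h1 : Real.log (e (z l)) ≤ Real.log ((1 / 2) * (nX (z (l + 1)) / nX (z l))) :=
      Real.log_le_log (hepos _) hd
    rw [Real.log_mul (by norm_num) (div_ne_zero (zreg _) (zreg _)),
      Real.log_div (zreg _) (zreg _), one_div, Real.log_inv] at h1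
    exact h1
  -- bounds on M
  obtain ⟨zmax, -, hmax⟩ := isCompact_univ.exists_isMaxOn Set.univ_nonempty
    hnXc.continuousOn
  obtain ⟨zmin, -, hmin⟩ := isCompact_univ.exists_isMinOn Set.univ_nonempty
    (hec.log fun y => (hepos y).ne').continuousOn
  set m : ℝ := Real.log (e zmin) with hmdef
  have hm : ∀ y : M, m ≤ Real.log (e y) := fun y => hmin (Set.mem_univ y)
  set C : ℝ := nX zmax with hCdef
  have hC : ∀ n, nX (z n) ≤ C := fun n => hmax (Set.mem_univ (z n))
  have hCpos : 0 < C := lt_of_lt_of_le (zpos 0) (hC 0)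
  set B : ℝ := Real.log C - g 0 with hBdef
  set S : ℕ → ℝ := fun n => ∑ l ∈ range n, Real.log (e (z l)) with hSdef
  have hSsum : ∀ n, S n ≤ (n : ℝ) * (-Real.log 2) + B := by
    intro n
    have h1 : S n ≤ ∑ l ∈ range n, (-Real.log 2 + (g (l + 1) - g l)) :=
      Finset.sum_le_sum fun l _ => key l
    have h2 : ∑ l ∈ range n, (-Real.log 2 + (g (l + 1) - g l))
        = (n : ℝ) * (-Real.log 2) + (g n - g 0) := by
      rw [Finset.sum_add_distrib, Finset.sum_const, Finset.sum_range_sub,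
        nsmul_eq_mul, Finset.card_range]
    have h3 : g n - g 0 ≤ B := by
      have : g n ≤ Real.log C := Real.log_le_log (zpos n) (hC n)
      simp only [hBdef]; linarith
    calc S n ≤ (n : ℝ) * (-Real.log 2) + (g n - g 0) := h2 ▸ h1
      _ ≤ (n : ℝ) * (-Real.log 2) + B := by linarith
  have hlog2 : 0 < Real.log 2 := Real.log_pos (by norm_num)
  -- eventual bound
  have hBn : Filter.Tendsto (fun n : ℕ => B / (n : ℝ)) atTop (nhds 0) :=
    tendsto_const_div_atTop_nhds_zero_nat B
  have hev : ∀ᶠ n : ℕ in atTop, S n / (n : ℝ) ≤ -Real.log 2 / 2 := by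
    have h1 : ∀ᶠ n : ℕ in atTop, B / (n : ℝ) < Real.log 2 / 2 :=
      hBn.eventually (eventually_lt_nhds (by linarith))
    filter_upwards [h1, eventually_ge_atTop 1] with n hn1 hn2
    have hnpos : (0 : ℝ) < (n : ℝ) := by exact_mod_cast hn2
    have h3 : S n / (n : ℝ) ≤ ((n : ℝ) * (-Real.log 2) + B) / (n : ℝ) :=
      div_le_div_of_nonneg_right (hSsum n) hnpos.le
    have h4 : ((n : ℝ) * (-Real.log 2) + B) / (n : ℝ) = -Real.log 2 + B / (n : ℝ) := by
      field_simp
    rw [h4] at h3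
    linarith
  -- bounded below
  have hbdd : Filter.IsBoundedUnder (· ≥ ·) atTop (fun n : ℕ => S n / (n : ℝ)) := by
    refine isBoundedUnder_of ⟨min m 0, fun n => ?_⟩
    rcases Nat.eq_zero_or_pos n with h | h
    · simp [hSdef, h, min_le_right m 0]
    · have hnpos : (0 : ℝ) < (n : ℝ) := by exact_mod_cast h
      have h1 : (n : ℝ) * m ≤ S n := by
        calc (n : ℝ) * m = ∑ _l ∈ range n, m := by
              rw [Finset.sum_const, Finset.card_range, nsmul_eq_mul]
          _ ≤ S n := Finset.sum_le_sum fun l _ => hm (z l)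
      have : m ≤ S n / (n : ℝ) := (le_div_iff₀ hnpos).mpr (by linarith)
      exact le_trans (min_le_left m 0) this
  have hliminf : Filter.liminf (fun n : ℕ => S n / (n : ℝ)) atTop ≤ -Real.log 2 / 2 :=
    Filter.liminf_le_of_frequently_le hev.frequently hbdd
  calc Filter.liminf (fun n : ℕ => S n / (n : ℝ)) atTop
      ≤ -Real.log 2 / 2 := hliminf
    _ < 0 := by linarith
end
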